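/- Let x_1, …, x_T ∈ ℝ^N (T ≥ 1) with positive definite sample covariance C := (1/T) Σ_t x_t x_tᵀ, and let w_1, …, w_K ∈ ℝ^N be unit vectors. For families Y = (y_1, …, y_T) in ℝ^N and g ∈ ℝ^K, define ℓ(Y, g) := (1/T) Σ_{t=1}^T ‖x_t − y_t‖² + Σ_{i=1}^K g_i [ (1/T) Σ_{t=1}^T (w_iᵀ y_t)² − 1 ]. Suppose g* ∈ ℝ^K satisfies I_N + Σ_{i=1}^K g*_i w_i w_iᵀ = C^{1/2}, and set y*_t := C^{-1/2} x_t. Then for all g ∈ ℝ^K and all families Y: ℓ(Y*, g) ≤ ℓ(Y*, g*) ≤ ℓ(Y, g*), i.e., (Y*, g*) is a saddle point of ℓ. -/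

import Mathlib

/-! Write `S = C^{1/2}`, so that `S y*ₜ = xₜ`. At `Y*` every marginal variance constraint is tight:
with `S v = wᵢ`, `(1/T) Σₜ (wᵢᵀ y*ₜ)² = vᵀ C v = (S v)ᵀ (S v) = ‖wᵢ‖² = 1`, so `ℓ(Y*, ·)` is constant.
Since `I + Σᵢ g*ᵢ wᵢ wᵢᵀ = S`, `ℓ(·, g*)` is, up to a constant, the mean over `t` of
`‖xₜ‖² - 2 xₜᵀ yₜ + yₜᵀ S yₜ`, a convex quadratic in `yₜ` minimised where `S yₜ = xₜ`, i.e. at `y*ₜ`. -/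

open Matrix BigOperators

noncomputable section

/-- The Lagrangian `ℓ(Y, g)` of the marginal-variance–constrained whitening objective
(Eq. 6 of the paper): mean-squared error plus gain-weighted marginal variance constraints. -/
def lagrangian {N K T : ℕ} (x : Fin T → (Fin N → ℝ)) (w : Fin K → (Fin N → ℝ))
    (Y : Fin T → (Fin N → ℝ)) (g : Fin K → ℝ) : ℝ :=
  (T : ℝ)⁻¹ * ∑ t, (x t - Y t) ⬝ᵥ (x t - Y t) +
    ∑ i, g i * ((T : ℝ)⁻¹ * (∑ t, (w i ⬝ᵥ Y t) ^ 2) - 1)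

/-- The positive semidefinite square root `Matrix.PosSemidef.sqrt`, as defined in Mathlib
(December 2024); it was removed from Mathlib since then. -/
def Matrix.PosSemidef.sqrt {n : Type*} [Fintype n] [DecidableEq n]
    {A : Matrix n n ℝ} (hA : A.PosSemidef) : Matrix n n ℝ :=
  (hA.1.eigenvectorUnitary : Matrix n n ℝ) *
    diagonal (fun i => Real.sqrt (hA.1.eigenvalues i)) *
    (star hA.1.eigenvectorUnitary : Matrix n n ℝ)

namespace Matrix

variable {n ι : Type*} [Fintype n]

theorem IsSymm.mulVec_dotProduct {α : Type*} [CommSemiring α] {A : Matrix n n α} (hA : A.IsSymm)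
    (v w : n → α) : A *ᵥ v ⬝ᵥ w = v ⬝ᵥ A *ᵥ w := by
  rw [dotProduct_mulVec, ← mulVec_transpose, hA.eq]

theorem dotProduct_sum_smul_vecMulVec_mulVec {α : Type*} [CommSemiring α] [Fintype ι]
    (g : ι → α) (w : ι → n → α) (y : n → α) :
    y ⬝ᵥ (∑ i, g i • vecMulVec (w i) (w i)) *ᵥ y = ∑ i, g i * (w i ⬝ᵥ y) ^ 2 := by
  simp only [sum_mulVec, dotProduct_sum, smul_mulVec, dotProduct_smul, vecMulVec_mulVec]
  refine Finset.sum_congr rfl fun i _ => ?_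
  simp only [MulOpposite.smul_eq_mul_unop, MulOpposite.unop_op, smul_eq_mul, dotProduct_comm y]
  ring

theorem PosSemidef.dotProduct_sub_add_le [DecidableEq n] {S : Matrix n n ℝ} (hS : S.PosSemidef)
    {x y₀ : n → ℝ} (hx : S *ᵥ y₀ = x) (y : n → ℝ) :
    (x - y₀) ⬝ᵥ (x - y₀) + y₀ ⬝ᵥ (S - 1) *ᵥ y₀ ≤ (x - y) ⬝ᵥ (x - y) + y ⬝ᵥ (S - 1) *ᵥ y := by
  have hnonneg : 0 ≤ (y - y₀) ⬝ᵥ S *ᵥ (y - y₀) := by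
    simpa using hS.dotProduct_mulVec_nonneg (y - y₀)
  have hS_symm : S.IsSymm := isHermitian_iff_isSymm.1 hS.1
  subst hx
  simp only [dotProduct_sub, sub_dotProduct, mulVec_sub, sub_mulVec, one_mulVec] at hnonneg ⊢
  linarith [dotProduct_comm (S *ᵥ y₀) y₀, dotProduct_comm y (S *ᵥ y₀), dotProduct_comm y y₀,
    hS_symm.mulVec_dotProduct y₀ y]

theorem IsSymm.smul_sum_sq_dotProduct_eq {τ : Type*} [Fintype τ] [DecidableEq n]
    {S : Matrix n n ℝ} (hS : S.IsSymm) (hS_unit : IsUnit S) {c : ℝ} {x y : τ → n → ℝ}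
    (hSS : S * S = c • ∑ t, vecMulVec (x t) (x t)) (hy : ∀ t, S *ᵥ y t = x t) (w : n → ℝ) :
    c * ∑ t, (w ⬝ᵥ y t) ^ 2 = w ⬝ᵥ w := by
  obtain ⟨v, rfl⟩ := mulVec_surjective_iff_isUnit.2 hS_unit w
  calc c * ∑ t, (S *ᵥ v ⬝ᵥ y t) ^ 2
      = v ⬝ᵥ (∑ t, c • vecMulVec (x t) (x t)) *ᵥ v := by
        simp only [hS.mulVec_dotProduct, hy, dotProduct_sum_smul_vecMulVec_mulVec, Finset.mul_sum]
        exact Finset.sum_congr rfl fun t _ ↦ by rw [dotProduct_comm]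
    _ = S *ᵥ v ⬝ᵥ S *ᵥ v := by
        rw [← Finset.smul_sum, ← hSS, ← mulVec_mulVec, hS.mulVec_dotProduct]

section sqrt

variable [DecidableEq n] {A : Matrix n n ℝ}

theorem PosSemidef.posSemidef_sqrt (hA : A.PosSemidef) : hA.sqrt.PosSemidef := by
  simpa [PosSemidef.sqrt, Unitary.coe_star, star_eq_conjTranspose] using
    (PosSemidef.diagonal fun i ↦ Real.sqrt_nonneg (hA.1.eigenvalues i)).mul_mul_conjTranspose_same
      (hA.1.eigenvectorUnitary : Matrix n n ℝ)

theorem PosSemidef.sqrt_mul_self (hA : A.PosSemidef) : hA.sqrt * hA.sqrt = A := by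
  set U := (hA.1.eigenvectorUnitary : Matrix n n ℝ)
  set D := diagonal fun i ↦ Real.sqrt (hA.1.eigenvalues i)
  have hU : star U * U = 1 := Unitary.coe_star_mul_self _
  have hD : D * D = diagonal (RCLike.ofReal ∘ hA.1.eigenvalues) := by
    simp [D, diagonal_mul_diagonal, Real.mul_self_sqrt (hA.eigenvalues_nonneg _)]
  conv_rhs => rw [hA.1.spectral_theorem, Unitary.conjStarAlgAut_apply]
  calc hA.sqrt * hA.sqrt = U * (D * (star U * U) * D) * star U := by
        simp only [PosSemidef.sqrt, U, D, Matrix.mul_assoc]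
    _ = _ := by rw [hU, Matrix.mul_one, hD]

theorem PosDef.isUnit_sqrt (hA : A.PosDef) : IsUnit hA.posSemidef.sqrt :=
  isUnit_of_mul_isUnit_left (hA.posSemidef.sqrt_mul_self ▸ hA.isUnit)

end sqrt

end Matrix

theorem lagrangian_eq {N K T : ℕ} (x : Fin T → Fin N → ℝ) (w : Fin K → Fin N → ℝ)
    (Y : Fin T → Fin N → ℝ) (g : Fin K → ℝ) :
    lagrangian x w Y g = (T : ℝ)⁻¹ * ∑ t, ((x t - Y t) ⬝ᵥ (x t - Y t) +
      Y t ⬝ᵥ (∑ i, g i • vecMulVec (w i) (w i)) *ᵥ Y t) - ∑ i, g i := by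
  simp only [lagrangian, dotProduct_sum_smul_vecMulVec_mulVec, Finset.sum_add_distrib, mul_add,
    mul_sub, Finset.sum_sub_distrib, mul_one, Finset.mul_sum]
  rw [Finset.sum_comm, add_sub_assoc]
  congr 3 with t
  exact Finset.sum_congr rfl fun i _ ↦ by ring

theorem lagrangian_eq_of_forall_variance_eq_one {N K T : ℕ} (x : Fin T → Fin N → ℝ)
    (w : Fin K → Fin N → ℝ) (Y : Fin T → Fin N → ℝ)
    (hY : ∀ i, (T : ℝ)⁻¹ * ∑ t, (w i ⬝ᵥ Y t) ^ 2 = 1) (g : Fin K → ℝ) :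
    lagrangian x w Y g = (T : ℝ)⁻¹ * ∑ t, (x t - Y t) ⬝ᵥ (x t - Y t) := by
  simp [lagrangian, hY]

theorem lagrangian_saddle_point_general
    (N K T : ℕ)
    (x : Fin T → (Fin N → ℝ))
    (hC : Matrix.PosDef ((T : ℝ)⁻¹ • ∑ t, vecMulVec (x t) (x t)))
    (w : Fin K → (Fin N → ℝ)) (hunit : ∀ i, w i ⬝ᵥ w i = 1)
    (gstar : Fin K → ℝ)
    (hgstar : (1 : Matrix (Fin N) (Fin N) ℝ) + ∑ i, gstar i • vecMulVec (w i) (w i) =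
      hC.posSemidef.sqrt)
    (ystar : Fin T → (Fin N → ℝ))
    (hystar : ∀ t, ystar t = (hC.posSemidef.sqrt)⁻¹.mulVec (x t)) :
    ∀ (g : Fin K → ℝ) (Y : Fin T → (Fin N → ℝ)),
      lagrangian x w ystar g ≤ lagrangian x w ystar gstar ∧
      lagrangian x w ystar gstar ≤ lagrangian x w Y gstar := by
  intro g Y
  set S := hC.posSemidef.sqrt
  have hS : S.PosSemidef := hC.posSemidef.posSemidef_sqrt
  have hSy : ∀ t, S *ᵥ ystar t = x t := fun t ↦ by
    rw [hystar, mulVec_mulVec, mul_nonsing_inv _ ((isUnit_iff_isUnit_det S).1 hC.isUnit_sqrt),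
      one_mulVec]
  have hvar : ∀ i, (T : ℝ)⁻¹ * ∑ t, (w i ⬝ᵥ ystar t) ^ 2 = 1 := fun i ↦
    ((isHermitian_iff_isSymm.1 hS.1).smul_sum_sq_dotProduct_eq hC.isUnit_sqrt
      hC.posSemidef.sqrt_mul_self hSy (w i)).trans (hunit i)
  have hM : ∑ i, gstar i • vecMulVec (w i) (w i) = S - 1 := eq_sub_of_add_eq' hgstar
  refine ⟨by rw [lagrangian_eq_of_forall_variance_eq_one x w ystar hvar,
    lagrangian_eq_of_forall_variance_eq_one x w ystar hvar], ?_⟩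
  rw [lagrangian_eq, lagrangian_eq, hM]
  gcongr (T : ℝ)⁻¹ * ∑ t, ?_ - _ with t
  exact hS.dotProduct_sub_add_le (hSy t) (Y t)

/-- Saddle point property (Appendix E): if `g*` satisfies
`I_N + Σᵢ g*ᵢ wᵢ wᵢᵀ = C^{1/2}` and `y*ₜ = C^{-1/2} xₜ`, then `(Y*, g*)` is a saddle point
of the Lagrangian: `ℓ(Y*, g) ≤ ℓ(Y*, g*) ≤ ℓ(Y, g*)` for all `g` and all `Y`. -/
theorem lagrangian_saddle_point
    (N K T : ℕ) (hT : 1 ≤ T)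
    (x : Fin T → (Fin N → ℝ))
    (hC : Matrix.PosDef ((T : ℝ)⁻¹ • ∑ t, vecMulVec (x t) (x t)))
    (w : Fin K → (Fin N → ℝ)) (hunit : ∀ i, w i ⬝ᵥ w i = 1)
    (gstar : Fin K → ℝ)
    (hgstar : (1 : Matrix (Fin N) (Fin N) ℝ) + ∑ i, gstar i • vecMulVec (w i) (w i) =
      hC.posSemidef.sqrt)
    (ystar : Fin T → (Fin N → ℝ))
    (hystar : ∀ t, ystar t = (hC.posSemidef.sqrt)⁻¹.mulVec (x t)) :
    ∀ (g : Fin K → ℝ) (Y : Fin T → (Fin N → ℝ)),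
      lagrangian x w ystar g ≤ lagrangian x w ystar gstar ∧
      lagrangian x w ystar gstar ≤ lagrangian x w Y gstar :=
  lagrangian_saddle_point_general N K T x hC w hunit gstar hgstar ystar hystar
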